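/- Let M be a deterministic program, h ∈ ℍ, ℓ ∈ 𝕃, and let q > 0 be any positive real. Then BE[⟨μ,h,ℓ⟩](M) ≤ q holds for every belief μ on ℍ if and only if the program M(ℓ) = λh'. M(h',ℓ) is non-interferent (i.e., M(h',ℓ) = M(h'',ℓ) for all h', h'' ∈ ℍ). -/

import Mathlib

/-!
For a belief with full support, both divergences from the point mass `ḣ` reduce to
`-log₂` of the mass at `h`, so `BE` collapses to `-log₂ μ_ℓ(o)`, the surprisal of the observed
output. Non-interference makes that output certain, so `BE = 0 ≤ q`. Otherwise some `h₀`
produces a different output, and a belief mixing the point mass at `h₀` with a little of the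
uniform distribution puts mass below `2^(-q)` on the observed output, so `BE > q`.
-/

variable {Hi Li Oi : Type*}

/-- Relative entropy (distance) `D(μ → μ') = Σ_h μ'(h) · log₂(μ'(h)/μ(h))`. -/
noncomputable def relD {X : Type*} [Fintype X] (μ μ' : X → ℝ) : ℝ :=
  ∑ x, μ' x * Real.logb 2 (μ' x / μ x)

/-- The point-mass distribution `ḣ` at `h`. -/
noncomputable def pointMass {X : Type*} [DecidableEq X] (h : X) : X → ℝ :=
  fun h' => if h = h' then 1 else 0

/-- The updated belief `μ|o_E`. -/
noncomputable def postBelief [Fintype Hi] [DecidableEq Oi]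
    (M : Hi × Li → Oi) (μ : Hi → ℝ) (ℓE : Li) (oE : Oi) : Hi → ℝ :=
  fun h => if M (h, ℓE) = oE then μ h / (∑ h', if M (h', ℓE) = oE then μ h' else 0) else 0

/-- Belief-based QIF `BE[⟨μ,h_E,ℓ_E⟩](M) = D(μ → ḣ_E) − D(μ|o_E → ḣ_E)`. -/
noncomputable def BE [Fintype Hi] [DecidableEq Hi] [DecidableEq Oi]
    (M : Hi × Li → Oi) (μ : Hi → ℝ) (hE : Hi) (ℓE : Li) : ℝ :=
  relD μ (pointMass hE) - relD (postBelief M μ ℓE (M (hE, ℓE))) (pointMass hE)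

open Finset

section Beliefs

variable {X : Type*} [Fintype X] [DecidableEq X]

lemma relD_pointMass (ν : X → ℝ) (x : X) : relD ν (pointMass x) = -Real.logb 2 (ν x) := by
  rw [relD, sum_eq_single x (fun y _ hyx => by simp [pointMass, Ne.symm hyx]) (by simp)]
  simp [pointMass, Real.logb_inv]

lemma exists_belief_sum_le_of_notMem {s : Finset X} {x₀ : X} (hx₀ : x₀ ∉ s)
    {c : ℝ} (hc0 : 0 < c) (hc1 : c ≤ 1) :
    ∃ μ : X → ℝ, (∀ x, 0 < μ x) ∧ ∑ x, μ x = 1 ∧ ∑ x ∈ s, μ x ≤ c := by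
  have hn : 0 < (Fintype.card X : ℝ) := by
    have : Nonempty X := ⟨x₀⟩
    exact_mod_cast Fintype.card_pos
  refine ⟨fun x => (1 - c) * pointMass x₀ x + c / Fintype.card X, fun x => ?_, ?_, ?_⟩
  · have : 0 ≤ pointMass x₀ x := by unfold pointMass; split <;> norm_num
    have : 0 ≤ 1 - c := by linarith
    positivity
  · simp only [sum_add_distrib, ← mul_sum, pointMass, sum_ite_eq, mem_univ, if_true, sum_const,
      card_univ, nsmul_eq_mul]
    field_simp
    ring
  · have hs : ∀ x ∈ s, pointMass x₀ x = 0 := fun x hx =>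
      if_neg (ne_of_mem_of_not_mem hx hx₀).symm
    have hcard : (#s : ℝ) ≤ Fintype.card X := by exact_mod_cast card_le_univ s
    calc ∑ x ∈ s, ((1 - c) * pointMass x₀ x + c / Fintype.card X)
        = ∑ _x ∈ s, c / Fintype.card X := sum_congr rfl fun x hx => by simp [hs x hx]
      _ = c * (#s / Fintype.card X) := by rw [sum_const, nsmul_eq_mul, mul_div_left_comm]
      _ ≤ c := mul_le_of_le_one_right hc0.le ((div_le_one hn).2 hcard)

end Beliefs

section OutputMass

variable [Fintype Hi] [DecidableEq Oi]

/-- The paper's `μ_ℓ(o)`. -/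
noncomputable def outputMass (M : Hi × Li → Oi) (μ : Hi → ℝ) (ℓ : Li) (o : Oi) : ℝ :=
  ∑ h, if M (h, ℓ) = o then μ h else 0

lemma outputMass_eq_sum_filter (M : Hi × Li → Oi) (μ : Hi → ℝ) (ℓ : Li) (o : Oi) :
    outputMass M μ ℓ o = ∑ h ∈ univ.filter (fun h => M (h, ℓ) = o), μ h :=
  (sum_filter _ _).symm

lemma outputMass_eq_sum_of_forall {M : Hi × Li → Oi} {ℓ : Li} {o : Oi}
    (hM : ∀ h, M (h, ℓ) = o) (μ : Hi → ℝ) : outputMass M μ ℓ o = ∑ h, μ h :=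
  sum_congr rfl fun h _ => if_pos (hM h)

lemma outputMass_pos (M : Hi × Li → Oi) {μ : Hi → ℝ} (hμ : ∀ h, 0 < μ h) (h : Hi) (ℓ : Li) :
    0 < outputMass M μ ℓ (M (h, ℓ)) := by
  rw [outputMass_eq_sum_filter]
  exact sum_pos (fun h' _ => hμ h') ⟨h, by simp⟩

variable [DecidableEq Hi]

lemma BE_eq_neg_logb_outputMass (M : Hi × Li → Oi) {μ : Hi → ℝ} (hμ : ∀ h, 0 < μ h)
    (h : Hi) (ℓ : Li) : BE M μ h ℓ = -Real.logb 2 (outputMass M μ ℓ (M (h, ℓ))) := by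
  have hpost : postBelief M μ ℓ (M (h, ℓ)) h = μ h / outputMass M μ ℓ (M (h, ℓ)) := if_pos rfl
  rw [BE, relD_pointMass, relD_pointMass, hpost,
    Real.logb_div (hμ h).ne' (outputMass_pos M hμ h ℓ).ne']
  ring

lemma BE_le_iff (M : Hi × Li → Oi) {μ : Hi → ℝ} (hμ : ∀ h, 0 < μ h) (h : Hi) (ℓ : Li)
    (q : ℝ) : BE M μ h ℓ ≤ q ↔ (2 : ℝ) ^ (-q) ≤ outputMass M μ ℓ (M (h, ℓ)) := by
  rw [BE_eq_neg_logb_outputMass M hμ, neg_le,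
    Real.le_logb_iff_rpow_le one_lt_two (outputMass_pos M hμ h ℓ)]

end OutputMass

theorem BE_le_q_forall_belief_iff_noninterferent_at_general
    [Fintype Hi] [DecidableEq Hi] [DecidableEq Oi]
    (M : Hi × Li → Oi) (h : Hi) (ℓ : Li) (q : ℝ) (hq : 0 < q) :
    (∀ μ : Hi → ℝ, (∀ h', 0 < μ h') → (∑ h', μ h' = 1) → BE M μ h ℓ ≤ q) ↔
      (∀ h' h'' : Hi, M (h', ℓ) = M (h'', ℓ)) := by
  have hthreshold_pos : (0 : ℝ) < 2 ^ (-q) := by positivity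
  have hthreshold_le_one : (2 : ℝ) ^ (-q) ≤ 1 :=
    Real.rpow_le_one_of_one_le_of_nonpos one_le_two (by linarith)
  refine ⟨fun hBE => ?_, fun hNI μ hμ hsum => ?_⟩
  · suffices hconst : ∀ h', M (h', ℓ) = M (h, ℓ) from
      fun h' h'' => (hconst h').trans (hconst h'').symm
    intro h₀
    by_contra hh₀
    obtain ⟨μ, hμ, hsum, hsmall⟩ := exists_belief_sum_le_of_notMem
      (s := univ.filter fun h' => M (h', ℓ) = M (h, ℓ)) (by simpa using hh₀)
      (c := 2 ^ (-q) / 2) (by positivity) (by linarith)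
    have hlarge := (BE_le_iff M hμ h ℓ q).1 (hBE μ hμ hsum)
    rw [outputMass_eq_sum_filter] at hlarge
    linarith
  · rw [BE_le_iff M hμ, outputMass_eq_sum_of_forall (fun h' => hNI h' h), hsum]
    exact hthreshold_le_one

/-- `BE[⟨μ,h,ℓ⟩](M) ≤ q` holds for every belief `μ` iff `M(ℓ)` is
non-interferent. -/
theorem BE_le_q_forall_belief_iff_noninterferent_at
    [Fintype Hi] [Fintype Li] [Fintype Oi] [DecidableEq Hi] [DecidableEq Oi]
    [Nonempty Hi] [Nonempty Li]
    (M : Hi × Li → Oi) (h : Hi) (ℓ : Li) (q : ℝ) (hq : 0 < q) :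
    (∀ μ : Hi → ℝ, (∀ h', 0 < μ h') → (∑ h', μ h' = 1) → BE M μ h ℓ ≤ q) ↔
      (∀ h' h'' : Hi, M (h', ℓ) = M (h'', ℓ)) :=
  BE_le_q_forall_belief_iff_noninterferent_at_general M h ℓ q hq
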